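/- Let d ≥ 1 and let q be a complex number with |q| < 1/(d−1) (no condition when d = 1). Then the exponential distance matrix Ω_q, with entries (Ω_q)_{σρ} = q^{d−ℓ(ρ⁻¹σ)} for ρ, σ ∈ S_d, is invertible, and each entry of its inverse is given by the absolutely convergent series (Ω_q⁻¹)_{σρ} = ∑_{r=0}^{∞} (−q)^r W^r_≤(ρ,σ), where W^r_≤(ρ,σ) is the number of weakly monotone r-step walks from ρ to σ in the Hurwitz–Cayley graph. -/

import Mathlib

noncomputable section

/-- The number of cycles of a permutation of `{1,…,d}`, counting fixed points as 1-cycles. -/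
def ell {d : ℕ} (π : Equiv.Perm (Fin d)) : ℕ :=
  π.cycleType.card + (d - π.support.card)

/-- The transposition associated with a pair of points. -/
def toSwap {d : ℕ} (p : Fin d × Fin d) : Equiv.Perm (Fin d) :=
  Equiv.swap p.1 p.2

/-- `Wle d r ρ σ` is the number of weakly monotone `r`-step walks `ρ → σ` in the Hurwitz–Cayley
graph: sequences of transpositions `((i_1 j_1), …, (i_r j_r))` with `i_k < j_k`,
`j_1 ≤ j_2 ≤ ⋯ ≤ j_r` and `ρ·(i_1 j_1)⋯(i_r j_r) = σ`. -/
def Wle (d r : ℕ) (ρ σ : Equiv.Perm (Fin d)) : ℕ :=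
  Nat.card {l : List (Fin d × Fin d) //
    l.length = r ∧ (∀ p ∈ l, p.1 < p.2) ∧ (l.map Prod.snd).Pairwise (· ≤ ·) ∧
      ρ * (l.map toSwap).prod = σ}

/-- The exponential distance matrix of the Hurwitz–Cayley graph: the matrix whose `(σ, ρ)` entry
is `q` raised to the graph distance `d - ℓ(ρ⁻¹σ)` between `ρ` and `σ`. -/
def Omega (d : ℕ) (q : ℂ) : Matrix (Equiv.Perm (Fin d)) (Equiv.Perm (Fin d)) ℂ :=
  Matrix.of fun σ ρ => q ^ (d - ell (ρ⁻¹ * σ))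

/-!
Number the points `0, …, d-1`, write `|π| = d - ℓ(π)` and let the Jucys–Murphy elements
`X_t = ∑_{i<t} (i t)` act on `ℂ[S_d]` by right multiplication. Every `π ∈ S_{t+1}` moving `t`
is `(π(t) t) π'` for a unique `π' ∈ S_t`, and `|π'| = |π| - 1`; this gives
`Ω_q = (1 + q X_0)(1 + q X_1) ⋯ (1 + q X_{d-1})`.
On the other side, let `F_t = ∑ₙ (-q)ⁿ W_t(n)` count weakly monotone walks all of whose steps
`(i j)` have `j ≥ t`. Splitting off the steps with `j = t` gives `F_t (1 + q X_t) = F_{t+1}`,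
and `F_d = 1`, so `F_0 Ω_q = 1`. The same recursion, with `‖q X_t‖ ≤ |q| t ≤ |q| (d - 1) < 1`,
bounds the partial sums of `∑ₙ |q|ⁿ ‖W_t(n)‖` and gives absolute convergence.
-/

open Finset

namespace Equiv.Perm

variable {α : Type*} [DecidableEq α] [Fintype α]

def absLength (f : Perm α) : ℕ := #f.support - Multiset.card f.cycleType

lemma card_cycleType_le_card_support (f : Perm α) : Multiset.card f.cycleType ≤ #f.support := by
  rw [← sum_cycleType]
  simpa using Multiset.card_nsmul_le_sum fun n hn => (two_le_of_mem_cycleType hn).trans' one_le_two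

@[simp] lemma absLength_one : absLength (1 : Perm α) = 0 := by simp [absLength]

lemma Disjoint.absLength_mul {f g : Perm α} (h : f.Disjoint g) :
    absLength (f * g) = absLength f + absLength g := by
  have hf := card_cycleType_le_card_support f
  have hg := card_cycleType_le_card_support g
  rw [absLength, absLength, absLength, h.cycleType_mul, h.card_support_mul, Multiset.card_add]
  omega

lemma IsCycle.absLength {c : Perm α} (hc : c.IsCycle) : c.absLength = #c.support - 1 := by
  rw [Perm.absLength, hc.cycleType, Multiset.card_singleton]

lemma absLength_swap_mul_of_isCycle {c : Perm α} {x : α} (hc : c.IsCycle) (hx : c x ≠ x) :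
    absLength (swap x (c x) * c) + 1 = absLength c := by
  have h2 := hc.two_le_card_support
  by_cases hcc : c (c x) = x
  · have h1 : swap x (c x) * c = 1 :=
      mul_eq_one_iff_inv_eq.2 (by rw [swap_inv, ← hc.eq_swap_of_apply_apply_eq_self hx hcc])
    rw [h1, absLength_one, hc.absLength, hc.eq_swap_of_apply_apply_eq_self hx hcc,
      card_support_swap hx.symm]
  · rw [(hc.swap_mul hx hcc).absLength, hc.absLength, support_swap_mul_eq c x hcc,
      Finset.sdiff_singleton_eq_erase, card_erase_of_mem (mem_support.2 hx)]
    omega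

/-- Multiplying by the transposition `(x f(x))` splits `x` off its cycle. -/
lemma absLength_swap_mul {f : Perm α} {x : α} (hx : f x ≠ x) :
    absLength (swap x (f x) * f) + 1 = absLength f := by
  set c := f.cycleOf x
  have hcf : c ∈ f.cycleFactorsFinset := cycleOf_mem_cycleFactorsFinset_iff.2 (mem_support.2 hx)
  have hdisj : (f * c⁻¹).Disjoint c := disjoint_mul_inv_of_mem_cycleFactorsFinset hcf
  have hcx : c x = f x := cycleOf_apply_self f x
  have hf : f = c * (f * c⁻¹) := by rw [hdisj.symm.commute.eq, inv_mul_cancel_right]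
  have hsupp : (swap x (c x) * c).support ⊆ c.support := fun y hy =>
    (mem_support_swap_mul_imp_mem_support_ne hy).1
  have hdisj' : (swap x (c x) * c).Disjoint (f * c⁻¹) := hdisj.symm.mono hsupp subset_rfl
  have hc : c.IsCycle := isCycle_cycleOf f hx
  have hmul : swap x (f x) * f = swap x (c x) * c * (f * c⁻¹) := by
    rw [hcx, mul_assoc, ← hf]
  rw [hmul, hdisj'.absLength_mul, hf, hdisj.symm.absLength_mul, ← hf,
    ← absLength_swap_mul_of_isCycle hc (hcx ▸ hx)]
  ring

end Equiv.Perm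

instance List.finite_length_eq_and {α : Type*} [Fintype α] (n : ℕ) (P : List α → Prop) :
    Finite {l : List α // l.length = n ∧ P l} :=
  Finite.of_injective (β := List.Vector α n) (fun l => ⟨l.1, l.2.1⟩)
    fun _ _ h => Subtype.ext (congrArg Subtype.val h :)

lemma List.natCard_length_succ {α : Type*} [Fintype α] (n : ℕ) (P : List α → Prop) :
    Nat.card {l : List α // l.length = n + 1 ∧ P l} =
      ∑ a, Nat.card {l : List α // l.length = n ∧ P (a :: l)} := by
  rw [← Nat.card_sigma]
  refine (Nat.card_eq_of_bijective (fun x => ⟨x.1 :: x.2.1, by simp [x.2.2.1], x.2.2.2⟩)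
    ⟨?_, ?_⟩).symm
  · rintro ⟨a, l, hl⟩ ⟨b, m, hm⟩ h
    simp only [Subtype.mk.injEq, List.cons.injEq] at h
    obtain ⟨rfl, rfl⟩ := h
    rfl
  · rintro ⟨_ | ⟨a, l⟩, hl, hP⟩
    · simp at hl
    · exact ⟨⟨a, l, by simpa using hl, hP⟩, rfl⟩

lemma summable_of_succ_le_add_mul {a b : ℕ → ℝ} {c : ℝ} (ha : ∀ n, 0 ≤ a n) (hb : ∀ n, 0 ≤ b n)
    (hbs : Summable b) (hc₀ : 0 ≤ c) (hc : c < 1) (h : ∀ n, a (n + 1) ≤ b (n + 1) + c * a n) :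
    Summable a := by
  have hpartial (N : ℕ) : ∑ i ∈ range N, a i ≤ a 0 + ∑' n, b n + c * ∑ i ∈ range N, a i := by
    have hB : 0 ≤ ∑' n, b n := tsum_nonneg hb
    cases N with
    | zero => simpa using add_nonneg (ha 0) hB
    | succ N =>
      have h₁ : ∑ i ∈ range N, a (i + 1) ≤ ∑ i ∈ range N, b (i + 1) + c * ∑ i ∈ range N, a i := by
        rw [mul_sum, ← sum_add_distrib]
        exact sum_le_sum fun i _ => h i
      have h₂ : ∑ i ∈ range N, b (i + 1) ≤ ∑' n, b n :=
        (le_add_of_nonneg_right (hb 0)).trans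
          ((sum_range_succ' b N).symm.le.trans (hbs.sum_le_tsum _ fun i _ => hb i))
      have h₃ : ∑ i ∈ range N, a i ≤ ∑ i ∈ range (N + 1), a i := by
        rw [sum_range_succ]
        linarith [ha N]
      linarith [sum_range_succ' a N, mul_le_mul_of_nonneg_left h₃ hc₀]
  refine summable_of_sum_range_le ha (c := (a 0 + ∑' n, b n) / (1 - c)) fun N => ?_
  rw [le_div_iff₀ (by linarith)]
  linarith [hpartial N]

open scoped Matrix.Norms.L2Operator in
lemma Matrix.norm_entry_le_l2_opNorm {𝕜 m n : Type*} [RCLike 𝕜] [Fintype m] [Fintype n]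
    [DecidableEq n] (A : Matrix m n 𝕜) (i : m) (j : n) : ‖A i j‖ ≤ ‖A‖ := by
  simpa using (PiLp.norm_apply_le _ i).trans (A.l2_opNorm_mulVec (EuclideanSpace.single j 1))

lemma Matrix.tsum_apply {ι m n R : Type*} [AddCommMonoid R] [TopologicalSpace R] [T2Space R]
    {f : ι → Matrix m n R} (hf : Summable f) (i : m) (j : n) :
    (∑' k, f k) i j = ∑' k, f k i j :=
  (congrFun (_root_.tsum_apply hf) j).trans (_root_.tsum_apply (Pi.summable.1 hf i))

open Equiv Equiv.Perm
open scoped Matrix.Norms.L2Operator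

namespace OmegaInverse

variable {d : ℕ}

local notation "𝕄" d => Matrix (Perm (Fin d)) (Perm (Fin d)) ℂ

lemma sub_ell_eq_absLength (π : Perm (Fin d)) : d - ell π = π.absLength := by
  have h₁ : #π.support ≤ d := by simpa using card_le_univ π.support
  have h₂ := card_cycleType_le_card_support π
  rw [ell, absLength]
  omega

def jmPairs (d t : ℕ) : Finset (Fin d × Fin d) := {p | p.1 < p.2 ∧ (p.2 : ℕ) = t}

lemma mem_jmPairs {t : ℕ} {p : Fin d × Fin d} : p ∈ jmPairs d t ↔ p.1 < p.2 ∧ (p.2 : ℕ) = t := by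
  simp [jmPairs]

lemma card_jmPairs_le (d t : ℕ) : #(jmPairs d t) ≤ t := by
  simpa using card_le_card_of_injOn (fun p => (p.1 : ℕ)) (t := range t)
    (fun p hp => by
      rw [mem_coe, mem_jmPairs] at hp
      simp only [coe_range, Set.mem_Iio]
      omega)
    (fun p hp p' hp' h => by
      rw [mem_coe, mem_jmPairs] at hp hp'
      exact Prod.ext (Fin.ext h) (Fin.ext (hp.2.trans hp'.2.symm)))

/-- Right multiplication on `ℂ[S_d]` by the Jucys–Murphy element `∑_{i < t} (i t)`. -/
def jucysMurphy (d t : ℕ) : 𝕄 d := ∑ p ∈ jmPairs d t, (Equiv.mulRight (toSwap p)).permMatrix ℂ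

lemma mul_jucysMurphy_apply (M : 𝕄 d) (t : ℕ) (σ ρ : Perm (Fin d)) :
    (M * jucysMurphy d t) σ ρ = ∑ p ∈ jmPairs d t, M σ (ρ * toSwap p) := by
  rw [jucysMurphy, Finset.mul_sum, Matrix.sum_apply]
  refine sum_congr rfl fun p _ => ?_
  rw [Matrix.mul_apply_eq_vecMul, Matrix.vecMul_permMatrix]
  simp [toSwap]

lemma norm_jucysMurphy_le (d t : ℕ) : ‖jucysMurphy d t‖ ≤ t :=
  calc ‖jucysMurphy d t‖ ≤ ∑ p ∈ jmPairs d t, ‖(Equiv.mulRight (toSwap p)).permMatrix ℂ‖ :=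
        norm_sum_le _ _
    _ ≤ ∑ p ∈ jmPairs d t, 1 := sum_le_sum fun p _ => Matrix.permMatrix_l2_opNorm_le _
    _ ≤ t := by simpa using card_jmPairs_le d t

def IsSupportedBelow (T : ℕ) (π : Perm (Fin d)) : Prop := ∀ x ∈ π.support, (x : ℕ) < T

open scoped Classical in
def weightBelow (q : ℂ) (T : ℕ) (π : Perm (Fin d)) : ℂ :=
  if IsSupportedBelow T π then q ^ π.absLength else 0

lemma weightBelow_of_apply_ne {q : ℂ} {T : ℕ} {π : Perm (Fin d)} {x : Fin d} (hx : π x ≠ x)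
    (hT : T ≤ x) : weightBelow q T π = 0 :=
  if_neg fun h => (h x (mem_support.2 hx)).not_ge hT

lemma weightBelow_of_isSupportedBelow {q : ℂ} {T : ℕ} {π : Perm (Fin d)}
    (h : IsSupportedBelow T π) : weightBelow q T π = q ^ π.absLength :=
  if_pos h

lemma IsSupportedBelow.of_succ {t : ℕ} (ht : t < d) {π : Perm (Fin d)}
    (hπ : IsSupportedBelow (t + 1) π) (hk : π ⟨t, ht⟩ = ⟨t, ht⟩) : IsSupportedBelow t π := by
  intro x hx
  have : (x : ℕ) ≠ t := by
    rintro h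
    obtain rfl : x = ⟨t, ht⟩ := Fin.ext h
    exact mem_support.1 hx hk
  have := hπ x hx
  omega

lemma IsSupportedBelow.swap_mul {t : ℕ} {π : Perm (Fin d)} (hπ : IsSupportedBelow (t + 1) π)
    {p : Fin d × Fin d} (hp : p ∈ jmPairs d t) : IsSupportedBelow (t + 1) (toSwap p * π) := by
  rw [mem_jmPairs] at hp
  intro x hx
  rcases mem_union.1 (support_mul_le _ _ hx) with hx | hx
  · rw [toSwap, support_swap hp.1.ne, mem_insert, mem_singleton] at hx
    rcases hx with rfl | rfl <;> omega
  · exact hπ x hx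

lemma weightBelow_of_not_isSupportedBelow {q : ℂ} {T : ℕ} {π : Perm (Fin d)}
    (h : ¬IsSupportedBelow T π) : weightBelow q T π = 0 :=
  if_neg h

lemma IsSupportedBelow.mono {T T' : ℕ} (hT : T ≤ T') {π : Perm (Fin d)}
    (hπ : IsSupportedBelow T π) : IsSupportedBelow T' π :=
  fun x hx => (hπ x hx).trans_le hT

lemma sum_weightBelow_swap_mul_of_apply_eq (q : ℂ) {t : ℕ} (ht : t < d) {π : Perm (Fin d)}
    (hπk : π ⟨t, ht⟩ = ⟨t, ht⟩) : ∑ p ∈ jmPairs d t, weightBelow q t (toSwap p * π) = 0 := by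
  refine sum_eq_zero fun p hp => weightBelow_of_apply_ne (x := ⟨t, ht⟩) ?_ le_rfl
  rw [mem_jmPairs] at hp
  have hp2 : p.2 = ⟨t, ht⟩ := Fin.ext hp.2
  rw [Perm.mul_apply, hπk, toSwap, ← hp2, swap_apply_right]
  exact hp.1.ne

lemma sum_weightBelow_swap_mul_of_not_isSupportedBelow (q : ℂ) {t : ℕ} {π : Perm (Fin d)}
    (hπ : ¬IsSupportedBelow (t + 1) π) :
    ∑ p ∈ jmPairs d t, weightBelow q t (toSwap p * π) = 0 := by
  refine sum_eq_zero fun p hp => weightBelow_of_not_isSupportedBelow fun h => hπ ?_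
  have := (h.mono t.le_succ).swap_mul hp
  rwa [← mul_assoc, toSwap, Equiv.swap_mul_self, one_mul] at this

/-- Only `p = (π(t), t)` contributes: it is the one for which `toSwap p * π` fixes `t`. -/
lemma mul_sum_weightBelow_swap_mul_of_apply_ne (q : ℂ) {t : ℕ} (ht : t < d) {π : Perm (Fin d)}
    (hπ : IsSupportedBelow (t + 1) π) (hπk : π ⟨t, ht⟩ ≠ ⟨t, ht⟩) :
    q * ∑ p ∈ jmPairs d t, weightBelow q t (toSwap p * π) = q ^ π.absLength := by
  set k : Fin d := ⟨t, ht⟩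
  have hk : (k : ℕ) = t := rfl
  have hlt : π k < k := by
    have h₁ := hπ (π k) (mem_support.2 fun h => hπk (π.injective h))
    have h₂ := Fin.val_ne_of_ne hπk
    rw [Fin.lt_def]
    omega
  have hp₀ : (π k, k) ∈ jmPairs d t := mem_jmPairs.2 ⟨hlt, rfl⟩
  have hterm : ∀ p ∈ jmPairs d t, p ≠ (π k, k) → weightBelow q t (toSwap p * π) = 0 := by
    intro p hp hne
    rw [mem_jmPairs] at hp
    have hp2 : p.2 = k := Fin.ext hp.2
    have hp1 : π k ≠ p.1 := fun h => hne (Prod.ext h.symm hp2)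
    refine weightBelow_of_apply_ne (x := k) ?_ le_rfl
    rw [Perm.mul_apply, toSwap, hp2, swap_apply_of_ne_of_ne hp1 hπk]
    exact hπk
  have hfix : (toSwap (π k, k) * π) k = k := by simp [toSwap]
  have hlen : (toSwap (π k, k) * π).absLength + 1 = π.absLength := by
    rw [toSwap, swap_comm]
    exact absLength_swap_mul hπk
  rw [sum_eq_single_of_mem _ hp₀ hterm,
    weightBelow_of_isSupportedBelow ((hπ.swap_mul hp₀).of_succ ht hfix), ← hlen, pow_succ']

lemma weightBelow_succ (q : ℂ) {t : ℕ} (ht : t < d) (π : Perm (Fin d)) :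
    weightBelow q (t + 1) π =
      weightBelow q t π + q * ∑ p ∈ jmPairs d t, weightBelow q t (toSwap p * π) := by
  by_cases hπ : IsSupportedBelow (t + 1) π
  · by_cases hπk : π ⟨t, ht⟩ = ⟨t, ht⟩
    · rw [sum_weightBelow_swap_mul_of_apply_eq q ht hπk, mul_zero, add_zero,
        weightBelow_of_isSupportedBelow hπ, weightBelow_of_isSupportedBelow (hπ.of_succ ht hπk)]
    · rw [mul_sum_weightBelow_swap_mul_of_apply_ne q ht hπ hπk,
        weightBelow_of_apply_ne hπk le_rfl, zero_add, weightBelow_of_isSupportedBelow hπ]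
  · rw [sum_weightBelow_swap_mul_of_not_isSupportedBelow q hπ, mul_zero, add_zero,
      weightBelow_of_not_isSupportedBelow hπ,
      weightBelow_of_not_isSupportedBelow fun h => hπ (h.mono t.le_succ)]

lemma weightBelow_zero (q : ℂ) (π : Perm (Fin d)) :
    weightBelow q 0 π = if π = 1 then 1 else 0 := by
  by_cases hπ : π = 1
  · rw [if_pos hπ, weightBelow_of_isSupportedBelow (by simp [hπ, IsSupportedBelow]), hπ,
      absLength_one, pow_zero]
  · obtain ⟨x, hx⟩ := not_forall.1 fun h => hπ (Equiv.ext h)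
    rw [if_neg hπ, weightBelow_of_apply_ne hx (Nat.zero_le _)]

def jmProduct (q : ℂ) (T : ℕ) : 𝕄 d := ((List.range T).map fun t => 1 + q • jucysMurphy d t).prod

lemma jmProduct_succ (q : ℂ) (T : ℕ) :
    (jmProduct q (T + 1) : 𝕄 d) = jmProduct q T * (1 + q • jucysMurphy d T) :=
  List.prod_range_succ _ T

lemma jmProduct_apply (q : ℂ) {T : ℕ} (hT : T ≤ d) (σ ρ : Perm (Fin d)) :
    jmProduct q T σ ρ = weightBelow q T (ρ⁻¹ * σ) := by
  induction T generalizing σ ρ with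
  | zero => simp [jmProduct, Matrix.one_apply, weightBelow_zero, inv_mul_eq_one, eq_comm]
  | succ T ih =>
    have hswap (p : Fin d × Fin d) : (ρ * toSwap p)⁻¹ * σ = toSwap p * (ρ⁻¹ * σ) := by
      simp [toSwap, mul_assoc]
    simp only [jmProduct_succ, mul_add, mul_one, Matrix.add_apply, Matrix.mul_smul,
      Matrix.smul_apply, mul_jucysMurphy_apply, ih (Nat.le_of_succ_le hT), hswap,
      weightBelow_succ q hT, smul_eq_mul]

lemma Omega_eq_jmProduct (q : ℂ) : Omega d q = jmProduct q d := by
  ext σ ρ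
  rw [jmProduct_apply q le_rfl, weightBelow_of_isSupportedBelow fun x _ => x.isLt, Omega,
    Matrix.of_apply, sub_ell_eq_absLength]

def IsMonotoneWalkFrom (t : ℕ) (l : List (Fin d × Fin d)) : Prop :=
  (∀ p ∈ l, p.1 < p.2 ∧ t ≤ p.2) ∧ (l.map Prod.snd).Pairwise (· ≤ ·)

lemma isMonotoneWalkFrom_cons {t : ℕ} {p : Fin d × Fin d} {l : List (Fin d × Fin d)} :
    IsMonotoneWalkFrom t (p :: l) ↔ (p.1 < p.2 ∧ t ≤ p.2) ∧ IsMonotoneWalkFrom p.2 l := by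
  simp only [IsMonotoneWalkFrom, List.forall_mem_cons, List.map_cons, List.pairwise_cons,
    List.mem_map, forall_exists_index, and_imp, forall_apply_eq_imp_iff₂]
  constructor
  · rintro ⟨⟨hp, hl⟩, hle, hpw⟩
    exact ⟨hp, fun x hx => ⟨(hl x hx).1, Fin.le_def.1 (hle x hx)⟩, hpw⟩
  · rintro ⟨hp, hl, hpw⟩
    exact ⟨⟨hp, fun x hx => ⟨(hl x hx).1, hp.2.trans (hl x hx).2⟩⟩,
      fun x hx => Fin.le_def.2 (hl x hx).2, hpw⟩

def walkCount (t n : ℕ) (ρ σ : Perm (Fin d)) : ℕ :=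
  Nat.card {l : List (Fin d × Fin d) //
    l.length = n ∧ IsMonotoneWalkFrom t l ∧ ρ * (l.map toSwap).prod = σ}

lemma walkCount_zero_left (n : ℕ) (ρ σ : Perm (Fin d)) : walkCount 0 n ρ σ = Wle d n ρ σ :=
  Nat.card_congr <| subtypeEquivRight fun l => by simp [IsMonotoneWalkFrom, and_assoc]

lemma walkCount_zero (t : ℕ) (ρ σ : Perm (Fin d)) :
    walkCount t 0 ρ σ = if ρ = σ then 1 else 0 := by
  rcases eq_or_ne ρ σ with rfl | h
  · rw [if_pos rfl, walkCount, Nat.card_eq_one_iff_exists]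
    exact ⟨⟨[], rfl, by simp [IsMonotoneWalkFrom], by simp⟩,
      fun l => Subtype.ext (List.length_eq_zero_iff.1 l.2.1)⟩
  · rw [if_neg h, walkCount, Nat.card_eq_zero]
    exact .inl ⟨fun l => h (by simpa [List.length_eq_zero_iff.1 l.2.1] using l.2.2.2)⟩

def stepsFrom (d t : ℕ) : Finset (Fin d × Fin d) := {p | p.1 < p.2 ∧ t ≤ (p.2 : ℕ)}

lemma walkCount_succ (t n : ℕ) (ρ σ : Perm (Fin d)) :
    walkCount t (n + 1) ρ σ = ∑ p ∈ stepsFrom d t, walkCount p.2 n (ρ * toSwap p) σ := by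
  rw [walkCount, List.natCard_length_succ, stepsFrom, sum_filter]
  refine sum_congr rfl fun p _ => ?_
  split_ifs with hp
  · exact Nat.card_congr <| subtypeEquivRight fun l => by
      simp [isMonotoneWalkFrom_cons, hp, mul_assoc]
  · exact Nat.card_eq_zero.2 (.inl ⟨fun l => hp (isMonotoneWalkFrom_cons.1 l.2.2.1).1⟩)

lemma walkCount_succ_eq_add (t n : ℕ) (ρ σ : Perm (Fin d)) :
    walkCount t (n + 1) ρ σ =
      ∑ p ∈ jmPairs d t, walkCount t n (ρ * toSwap p) σ + walkCount (t + 1) (n + 1) ρ σ := by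
  have hsplit : (stepsFrom d t).filter (fun p => (p.2 : ℕ) = t) = jmPairs d t := by
    ext p
    simp only [stepsFrom, jmPairs, mem_filter, mem_univ, true_and]
    omega
  have hrest : (stepsFrom d t).filter (fun p => ¬(p.2 : ℕ) = t) = stepsFrom d (t + 1) := by
    ext p
    simp only [stepsFrom, mem_filter, mem_univ, true_and]
    omega
  rw [walkCount_succ, walkCount_succ, ← sum_filter_add_sum_filter_not _ (fun p => (p.2 : ℕ) = t),
    hsplit, hrest]
  congr 1
  exact sum_congr rfl fun p hp => by rw [(mem_jmPairs.1 hp).2]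

lemma walkCount_succ_of_le {t : ℕ} (ht : d ≤ t) (n : ℕ) (ρ σ : Perm (Fin d)) :
    walkCount t (n + 1) ρ σ = 0 := by
  rw [walkCount_succ, sum_eq_zero]
  intro p hp
  simp only [stepsFrom, mem_filter] at hp
  omega

def walkMatrix (t n : ℕ) : 𝕄 d := Matrix.of fun σ ρ => (walkCount t n ρ σ : ℂ)

lemma walkMatrix_zero (t : ℕ) : (walkMatrix t 0 : 𝕄 d) = 1 := by
  ext σ ρ
  simp [walkMatrix, walkCount_zero, Matrix.one_apply, eq_comm]

lemma walkMatrix_succ (t n : ℕ) :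
    (walkMatrix t (n + 1) : 𝕄 d) =
      walkMatrix t n * jucysMurphy d t + walkMatrix (t + 1) (n + 1) := by
  ext σ ρ
  rw [Matrix.add_apply, mul_jucysMurphy_apply]
  simp only [walkMatrix, Matrix.of_apply]
  rw [walkCount_succ_eq_add]
  push_cast
  rfl

lemma walkMatrix_succ_of_le {t : ℕ} (ht : d ≤ t) (n : ℕ) : (walkMatrix t (n + 1) : 𝕄 d) = 0 := by
  ext σ ρ
  simp [walkMatrix, walkCount_succ_of_le ht]

lemma norm_walkMatrix_succ_le (q : ℂ) (t n : ℕ) :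
    ‖(-q) ^ (n + 1) • (walkMatrix t (n + 1) : 𝕄 d)‖ ≤
      ‖(-q) ^ (n + 1) • (walkMatrix (t + 1) (n + 1) : 𝕄 d)‖ +
        ‖q‖ * t * ‖(-q) ^ n • (walkMatrix t n : 𝕄 d)‖ := by
  have hstep : ‖(-q) ^ (n + 1) • (walkMatrix t n * jucysMurphy d t)‖ ≤
      ‖q‖ * t * ‖(-q) ^ n • (walkMatrix t n : 𝕄 d)‖ := by
    rw [pow_succ', mul_smul, ← Matrix.smul_mul, norm_smul, norm_neg]
    calc ‖q‖ * ‖(-q) ^ n • walkMatrix t n * jucysMurphy d t‖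
        ≤ ‖q‖ * (‖(-q) ^ n • (walkMatrix t n : 𝕄 d)‖ * t) := by
          gcongr
          exact norm_mul_le_of_le le_rfl (norm_jucysMurphy_le d t)
      _ = _ := by ring
  rw [walkMatrix_succ, smul_add, add_comm]
  exact (norm_add_le _ _).trans (add_le_add_right hstep _)

lemma summable_norm_walkMatrix {q : ℂ} (hq : ‖q‖ * ((d : ℝ) - 1) < 1) (t : ℕ) :
    Summable fun n => ‖(-q) ^ n • (walkMatrix t n : 𝕄 d)‖ := by
  obtain ⟨k, hk⟩ : ∃ k, d ≤ t + k := ⟨d, Nat.le_add_left d t⟩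
  induction k generalizing t with
  | zero =>
    refine summable_of_ne_finset_zero (s := {0}) fun n hn => ?_
    obtain ⟨n, rfl⟩ := Nat.exists_eq_add_one_of_ne_zero (by simpa using hn)
    rw [walkMatrix_succ_of_le (by simpa using hk), smul_zero, norm_zero]
  | succ k ih =>
    rcases le_or_gt d t with ht | ht
    · exact ih t (by omega)
    have hc : ‖q‖ * t < 1 := by
      have : (t : ℝ) ≤ d - 1 := by
        rw [le_sub_iff_add_le]
        exact_mod_cast ht
      nlinarith [norm_nonneg q]
    exact summable_of_succ_le_add_mul (fun _ => norm_nonneg _) (fun _ => norm_nonneg _)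
      (ih (t + 1) (by omega)) (by positivity) hc (norm_walkMatrix_succ_le q t)

def walkSeries (q : ℂ) (t : ℕ) : 𝕄 d := ∑' n, (-q) ^ n • walkMatrix t n

lemma walkSeries_of_le (q : ℂ) {t : ℕ} (ht : d ≤ t) : (walkSeries q t : 𝕄 d) = 1 := by
  rw [walkSeries, tsum_eq_single 0 fun n hn => ?_, pow_zero, one_smul, walkMatrix_zero]
  obtain ⟨n, rfl⟩ := Nat.exists_eq_add_one_of_ne_zero hn
  rw [walkMatrix_succ_of_le ht, smul_zero]

lemma walkSeries_mul {q : ℂ} (hq : ‖q‖ * ((d : ℝ) - 1) < 1) (t : ℕ) :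
    walkSeries q t * (1 + q • jucysMurphy d t) = walkSeries q (t + 1) := by
  set f : ℕ → 𝕄 d := fun n => (-q) ^ n • walkMatrix t n
  set g : ℕ → 𝕄 d := fun n => (-q) ^ n • walkMatrix (t + 1) n
  have hf : Summable f := (summable_norm_walkMatrix hq t).of_norm
  have hg : Summable g := (summable_norm_walkMatrix hq (t + 1)).of_norm
  have hfg (n : ℕ) : f (n + 1) = (-q) • (f n * jucysMurphy d t) + g (n + 1) := by
    simp only [f, g]
    rw [walkMatrix_succ, smul_add, Matrix.smul_mul, smul_smul, pow_succ']
  have htail : ∑' n, f (n + 1) = (-q) • ((∑' n, f n) * jucysMurphy d t) + ∑' n, g (n + 1) := by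
    rw [tsum_congr hfg, ((hf.mul_right _).const_smul _).tsum_add ((summable_nat_add_iff 1).2 hg),
      (hf.mul_right _).tsum_const_smul, hf.tsum_mul_right]
  have hS : walkSeries q t =
      1 + (-q) • (walkSeries q t * jucysMurphy d t) + (walkSeries q (t + 1) - 1) := by
    change ∑' n, f n = 1 + (-q) • ((∑' n, f n) * jucysMurphy d t) + (∑' n, g n - 1)
    conv_lhs => rw [hf.tsum_eq_zero_add]
    rw [htail, hg.tsum_eq_zero_add]
    simp only [f, g, pow_zero, one_smul, walkMatrix_zero]
    abel
  calc walkSeries q t * (1 + q • jucysMurphy d t)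
      = walkSeries q t + q • (walkSeries q t * jucysMurphy d t) := by
        rw [mul_add, mul_one, Matrix.mul_smul]
    _ = walkSeries q (t + 1) := by
        nth_rewrite 1 [hS]
        rw [neg_smul]
        abel

lemma walkSeries_zero_mul_jmProduct {q : ℂ} (hq : ‖q‖ * ((d : ℝ) - 1) < 1) (T : ℕ) :
    walkSeries q 0 * jmProduct q T = (walkSeries q T : 𝕄 d) := by
  induction T with
  | zero => rw [jmProduct, List.range_zero, List.map_nil, List.prod_nil, mul_one]
  | succ T ih => rw [jmProduct_succ, ← mul_assoc, ih, walkSeries_mul hq]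

lemma norm_mul_sub_one_lt_one {q : ℂ} (hq : 2 ≤ d → ‖q‖ < 1 / ((d : ℝ) - 1)) :
    ‖q‖ * ((d : ℝ) - 1) < 1 := by
  rcases lt_or_ge d 2 with hd | hd
  · have : (d : ℝ) ≤ 1 := by exact_mod_cast Nat.lt_succ_iff.1 hd
    nlinarith [norm_nonneg q]
  · have : (2 : ℝ) ≤ d := by exact_mod_cast hd
    exact (lt_div_iff₀ (by linarith)).1 (hq hd)

lemma walkSeries_zero_mul_Omega {q : ℂ} (hq : ‖q‖ * ((d : ℝ) - 1) < 1) :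
    walkSeries q 0 * Omega d q = 1 := by
  rw [Omega_eq_jmProduct, walkSeries_zero_mul_jmProduct hq, walkSeries_of_le q le_rfl]

end OmegaInverse

open OmegaInverse in
theorem Omega_inv_entries_general (d : ℕ) (q : ℂ)
    (hq : 2 ≤ d → ‖q‖ < 1 / ((d : ℝ) - 1)) :
    IsUnit (Omega d q) ∧
    ∀ ρ σ : Equiv.Perm (Fin d),
      Summable (fun r : ℕ => ‖(-q) ^ r * (Wle d r ρ σ : ℂ)‖) ∧
      (Omega d q)⁻¹ σ ρ = ∑' r : ℕ, (-q) ^ r * (Wle d r ρ σ : ℂ) := by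
  have hq' := norm_mul_sub_one_lt_one hq
  have hleft := walkSeries_zero_mul_Omega hq'
  have hsum := summable_norm_walkMatrix hq' 0
  have hentry (r : ℕ) (ρ σ : Perm (Fin d)) :
      ((-q) ^ r • walkMatrix 0 r) σ ρ = (-q) ^ r * (Wle d r ρ σ : ℂ) := by
    simp [walkMatrix, walkCount_zero_left]
  refine ⟨(Matrix.isUnit_iff_isUnit_det _).2 (Matrix.isUnit_det_of_left_inverse hleft),
    fun ρ σ => ⟨?_, ?_⟩⟩
  · refine hsum.of_nonneg_of_le (fun _ => norm_nonneg _) fun r => ?_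
    rw [← hentry]
    exact Matrix.norm_entry_le_l2_opNorm _ σ ρ
  · rw [Matrix.inv_eq_left_inv hleft, walkSeries, Matrix.tsum_apply hsum.of_norm]
    exact tsum_congr fun r => hentry r ρ σ

/-- For `|q| < 1/(d-1)` (no condition when `d = 1`), the exponential distance
matrix `Ω_q` is invertible and each entry of its inverse is the absolutely convergent series
`(Ω_q⁻¹)_{σρ} = ∑_{r≥0} (-q)^r W^r_≤(ρ,σ)` counting weakly monotone walks. -/
theorem Omega_inv_entries (d : ℕ) (hd : 1 ≤ d) (q : ℂ)
    (hq : 2 ≤ d → ‖q‖ < 1 / ((d : ℝ) - 1)) :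
    IsUnit (Omega d q) ∧
    ∀ ρ σ : Equiv.Perm (Fin d),
      Summable (fun r : ℕ => ‖(-q) ^ r * (Wle d r ρ σ : ℂ)‖) ∧
      (Omega d q)⁻¹ σ ρ = ∑' r : ℕ, (-q) ^ r * (Wle d r ρ σ : ℂ) :=
  Omega_inv_entries_general d q hq
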